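/- Suppose Assumptions (A1)–(A6) hold. Under a good run, for every pair (j, k) ∈ [m] × [n]: (E1) if a_j y_k > 0 and ⟨w_j^{(s)}, x_k⟩ > 0 for some 0 ≤ s < 1/(√n p α) − 2, then ⟨w_j^{(t)}, x_k⟩ > 0 for all s ≤ t ≤ 1/(√n p α) − 2; (E2) if a_j y_k < 0, then ⟨w_j^{(t)}, x_k⟩ ≤ (α/√m) ‖μ‖² for all 0 ≤ t ≤ 1/(√n p α) − 2; (E3) if a_j y_k < 0 and ⟨w_j^{(t)}, x_k⟩ > 0 for some 0 ≤ t ≤ 1/(√n p α) − 3, then ⟨w_j^{(t+1)}, x_k⟩ < 0. -/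

import Mathlib

open MeasureTheory ProbabilityTheory BigOperators Filter
open scoped ENNReal NNReal

noncomputable section

namespace XOR

attribute [local instance] Classical.propDecidable

/-! ### Vectors, the network, and gradient descent -/

/-- Euclidean dot product on `Fin p → ℝ`. -/
def dot {p : ℕ} (x y : Fin p → ℝ) : ℝ := ∑ k, x k * y k

/-- Euclidean norm. -/
def nrm {p : ℕ} (x : Fin p → ℝ) : ℝ := Real.sqrt (dot x x)

/-- The ReLU activation. -/
def relu (z : ℝ) : ℝ := max z 0

/-- (A choice of) the derivative of the ReLU. -/
def reluD (z : ℝ) : ℝ := if 0 < z then 1 else 0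

/-- The two-layer ReLU network `f(x; W) = ∑ j, a j * φ(⟨w_j, x⟩)`. -/
def nnet {p m : ℕ} (a : Fin m → ℝ) (W : Fin m → Fin p → ℝ) (x : Fin p → ℝ) : ℝ :=
  ∑ j, a j * relu (dot (W j) x)

/-- `g(z) = -ℓ'(z) = 1/(1+e^z)` for the logistic loss `ℓ(z) = log(1+e^{-z})`. -/
def lossG (z : ℝ) : ℝ := 1 / (1 + Real.exp z)

/-- One step of gradient descent on the first-layer weights:
`w_j^{(t+1)} = w_j^{(t)} + (α a_j / n) ∑ i g_i^{(t)} φ'(⟨w_j^{(t)}, x_i⟩) y_i x_i`. -/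
def gdStep {n p m : ℕ} (α : ℝ) (X : Fin n → Fin p → ℝ) (Y : Fin n → ℝ)
    (a : Fin m → ℝ) (W : Fin m → Fin p → ℝ) : Fin m → Fin p → ℝ :=
  fun j k => W j k + (α * a j / n) *
    ∑ i, lossG (Y i * nnet a W (X i)) * reluD (dot (W j) (X i)) * (Y i * X i k)

/-- The gradient descent iterates `W^{(t)}`. -/
def gdIter {n p m : ℕ} (α : ℝ) (X : Fin n → Fin p → ℝ) (Y : Fin n → ℝ)
    (a : Fin m → ℝ) (W0 : Fin m → Fin p → ℝ) : ℕ → Fin m → Fin p → ℝ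
  | 0 => W0
  | t + 1 => gdStep α X Y a (gdIter α X Y a W0 t)

/-- Frobenius norm of the first-layer weight matrix. -/
def frob {p m : ℕ} (W : Fin m → Fin p → ℝ) : ℝ :=
  Real.sqrt (∑ j, ∑ k, (W j k) ^ 2)

/-! ### The XOR cluster structure -/

/-- The four cluster centers `+μ₁, -μ₁, +μ₂, -μ₂`, indexed by `Fin 4`. -/
def ctr {p : ℕ} (μ1 μ2 : Fin p → ℝ) : Fin 4 → Fin p → ℝ := ![μ1, -μ1, μ2, -μ2]

/-- The clean label of each cluster. -/
def cl : Fin 4 → ℝ := ![1, 1, -1, -1]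

/-- The index of the opposite center: `ν ↦ -ν`. -/
def negIdx : Fin 4 → Fin 4 := ![1, 0, 3, 2]

/-- The set of the four cluster centers. -/
def centers {p : ℕ} (μ1 μ2 : Fin p → ℝ) : Set (Fin p → ℝ) := {μ1, -μ1, μ2, -μ2}

/-- Structural hypotheses on the means: orthogonality and equal norms. -/
def MeanHyp {p : ℕ} (μ1 μ2 : Fin p → ℝ) : Prop :=
  dot μ1 μ2 = 0 ∧ nrm μ1 = nrm μ2

/-- Basic constraints on the parameters: `η ∈ [0, 1/2)`, `α > 0`, `ω_init ≥ 0`. -/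
def ParamHyp (η α winit : ℝ) : Prop :=
  0 ≤ η ∧ η < 1 / 2 ∧ 0 < α ∧ 0 ≤ winit

/-- Assumptions (A1)–(A6), where `μn = ‖μ‖`:
(A1) `‖μ‖² ≥ C n^{0.51} √p`, (A2) `p ≥ C n² ‖μ‖²`, (A3) `η ≤ 1/C`,
(A4) `α ≤ 1/(C n p)`, (A5) `ω_init n m^{3/2} p ≤ α ‖μ‖²`, (A6) `m ≥ C n^{0.02}`. -/
def Assum (C : ℝ) (n p m : ℕ) (μn η α winit : ℝ) : Prop :=
  C * (n : ℝ) ^ (0.51 : ℝ) * Real.sqrt p ≤ μn ^ 2 ∧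
  C * (n : ℝ) ^ 2 * μn ^ 2 ≤ (p : ℝ) ∧
  η ≤ 1 / C ∧
  α ≤ 1 / (C * n * p) ∧
  winit * n * (m : ℝ) ^ ((3 : ℝ) / 2) * (p : ℝ) ≤ α * μn ^ 2 ∧
  C * (n : ℝ) ^ (0.02 : ℝ) ≤ (m : ℝ)

/-! ### The probability model

The randomness is generated from canonical sources: for each training sample a
uniform cluster index in `Fin 4`, standard Gaussian noise in `ℝ^p`, and a standard
Gaussian variable whose CDF-value is used as the (uniform) label-flip coin; for
the network, uniform signs in `Bool` for the second layer, and standard Gaussian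
first-layer noise which is scaled by `ω_init`. -/

abbrev Vec (p : ℕ) := Fin p → ℝ

/-- Sample space: cluster indices, data noise, flip coins, second-layer signs,
and unscaled first-layer initialization. -/
abbrev Sample (n p m : ℕ) :=
  (Fin n → Fin 4) × (Fin n → Vec p) × (Fin n → ℝ) × (Fin m → Bool) × (Fin m → Vec p)

/-- The standard Gaussian measure on `ℝ^p`. -/
def stdG (p : ℕ) : Measure (Vec p) := Measure.pi fun _ => gaussianReal 0 1

/-- The joint law of all randomness. -/
def sampleMeasure (n p m : ℕ) : Measure (Sample n p m) :=
  ((PMF.uniformOfFintype (Fin n → Fin 4)).toMeasure).prod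
    ((Measure.pi fun _ : Fin n => stdG p).prod
      ((Measure.pi fun _ : Fin n => gaussianReal 0 1).prod
        (((PMF.uniformOfFintype (Fin m → Bool)).toMeasure).prod
          (Measure.pi fun _ : Fin m => stdG p))))

/-- The training inputs `x_i = x̄_i + ξ_i`. -/
def trainX {n p m : ℕ} (μ1 μ2 : Vec p) (ω : Sample n p m) : Fin n → Vec p :=
  fun i => ctr μ1 μ2 (ω.1 i) + ω.2.1 i

/-- The (possibly flipped) training labels: the label is flipped iff the uniform
variable `Φ(g_i)` is `< η`, which happens with probability `η`. -/
def trainY {n p m : ℕ} (η : ℝ) (ω : Sample n p m) : Fin n → ℝ :=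
  fun i => (if cdf (gaussianReal 0 1) (ω.2.2.1 i) < η then -1 else 1) * cl (ω.1 i)

/-- The second-layer weights `a_j ∈ {± 1/√m}`. -/
def secondLayer {n p m : ℕ} (ω : Sample n p m) : Fin m → ℝ :=
  fun j => if ω.2.2.2.1 j then 1 / Real.sqrt m else -(1 / Real.sqrt m)

/-- The initialization `w_j^{(0)} ∼ N(0, ω_init² I_p)`. -/
def initW {n p m : ℕ} (winit : ℝ) (ω : Sample n p m) : Fin m → Vec p :=
  fun j k => winit * ω.2.2.2.2 j k

/-- The trained first-layer weights `W^{(t)}`. -/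
def netW {n p m : ℕ} (μ1 μ2 : Vec p) (η α winit : ℝ) (ω : Sample n p m) (t : ℕ) :
    Fin m → Vec p :=
  gdIter α (trainX μ1 μ2 ω) (trainY η ω) (secondLayer ω) (initW winit ω) t

/-- The clean test distribution `P_clean` on `ℝ^p × ℝ`. -/
def Pclean (p : ℕ) (μ1 μ2 : Vec p) : Measure (Vec p × ℝ) :=
  Measure.map (fun w : Fin 4 × Vec p => (ctr μ1 μ2 w.1 + w.2, cl w.1))
    (((PMF.uniformOfFintype (Fin 4)).toMeasure).prod (stdG p))

/-- The Gaussian measure `N(ν, I_p)` at center index `q`. -/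
def gaussAt {p : ℕ} (μ1 μ2 : Vec p) (q : Fin 4) : Measure (Vec p) :=
  Measure.map (fun z => ctr μ1 μ2 q + z) (stdG p)

/-- The clean test error of the classifier `sgn ∘ f(·; a, W)`. -/
def testErr {p m : ℕ} (μ1 μ2 : Vec p) (a : Fin m → ℝ) (W : Fin m → Vec p) : ℝ :=
  ((Pclean p μ1 μ2) {xy : Vec p × ℝ | xy.2 ≠ Real.sign (nnet a W xy.1)}).toReal

/-! ### Counts, alignment, and the "good run" conditions -/

/-- `c_ν`: number of clean samples in the cluster with center index `q`. -/
def cntC {n : ℕ} (u : Fin n → Fin 4) (Y : Fin n → ℝ) (q : Fin 4) : ℕ :=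
  (Finset.univ.filter fun i => u i = q ∧ Y i = cl q).card

/-- `n_ν`: number of noisy samples in the cluster with center index `q`. -/
def cntN {n : ℕ} (u : Fin n → Fin 4) (Y : Fin n → ℝ) (q : Fin 4) : ℕ :=
  (Finset.univ.filter fun i => u i = q ∧ Y i ≠ cl q).card

/-- The clean samples of cluster `q` activating neuron `j` for weights `W`. -/
def actC {n p m : ℕ} (u : Fin n → Fin 4) (X : Fin n → Vec p) (Y : Fin n → ℝ)
    (W : Fin m → Vec p) (q : Fin 4) (j : Fin m) : Finset (Fin n) :=
  Finset.univ.filter fun i => u i = q ∧ Y i = cl q ∧ 0 < dot (W j) (X i)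

/-- The noisy samples of cluster `q` activating neuron `j` for weights `W`. -/
def actN {n p m : ℕ} (u : Fin n → Fin 4) (X : Fin n → Vec p) (Y : Fin n → ℝ)
    (W : Fin m → Vec p) (q : Fin 4) (j : Fin m) : Finset (Fin n) :=
  Finset.univ.filter fun i => u i = q ∧ Y i ≠ cl q ∧ 0 < dot (W j) (X i)

/-- `d_{ν,j} = |C_{ν,j}| - |N_{ν,j}|`. -/
def dval {n p m : ℕ} (u : Fin n → Fin 4) (X : Fin n → Vec p) (Y : Fin n → ℝ)
    (W : Fin m → Vec p) (q : Fin 4) (j : Fin m) : ℤ :=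
  ((actC u X Y W q j).card : ℤ) - ((actN u X Y W q j).card : ℤ)

/-- `D_{ν,j} = d_{ν,j} - d_{-ν,j}`. -/
def Dval {n p m : ℕ} (u : Fin n → Fin 4) (X : Fin n → Vec p) (Y : Fin n → ℝ)
    (W : Fin m → Vec p) (q : Fin 4) (j : Fin m) : ℤ :=
  dval u X Y W q j - dval u X Y W (negIdx q) j

/-- Neuron `j` is `(ν, κ)`-aligned (w.r.t. the initialization `W0`). -/
def Aligned {n p m : ℕ} (u : Fin n → Fin 4) (X : Fin n → Vec p) (Y : Fin n → ℝ)
    (W0 : Fin m → Vec p) (κ : ℝ) (q : Fin 4) (j : Fin m) : Prop :=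
  (n : ℝ) ^ ((1 : ℝ) / 2 - κ) < (Dval u X Y W0 q j : ℝ) ∧
  max ((dval u X Y W0 (negIdx q) j : ℝ)) ((dval u X Y W0 q j : ℝ)) <
    min (cntC u Y q : ℝ) (cntC u Y (negIdx q) : ℝ) -
      2 * ((cntN u Y q : ℝ) + (cntN u Y (negIdx q) : ℝ)) - Real.sqrt n

/-- Condition (B1). -/
def CondB1 {n p : ℕ} (μ1 μ2 : Vec p) (u : Fin n → Fin 4) (X : Fin n → Vec p) : Prop :=
  ∀ k : Fin n,
    (∀ ν ∈ centers μ1 μ2, dot (X k - ctr μ1 μ2 (u k)) ν ≤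
        10 * Real.sqrt (Real.log n) * nrm μ1) ∧
    |nrm (X k) ^ 2 - p - nrm μ1 ^ 2| ≤ 10 * Real.sqrt (p * Real.log n)

/-- Condition (B2). -/
def CondB2 {n p : ℕ} (μ1 μ2 : Vec p) (u : Fin n → Fin 4) (X : Fin n → Vec p) : Prop :=
  ∀ i k : Fin n, i ≠ k →
    |dot (X i) (X k) - dot (ctr μ1 μ2 (u i)) (ctr μ1 μ2 (u k))| ≤
      10 * Real.sqrt (p * Real.log n)

/-- Condition (B3). -/
def CondB3 {n : ℕ} (ε η : ℝ) (u : Fin n → Fin 4) (Y : Fin n → ℝ) : Prop :=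
  ∀ q : Fin 4,
    |(cntC u Y q : ℝ) + (cntN u Y q : ℝ) - n / 4| ≤ Real.sqrt (ε * n * Real.log n) ∧
    |(cntN u Y q : ℝ) - η * ((cntC u Y q : ℝ) + (cntN u Y q : ℝ))| ≤
      Real.sqrt (ε * η * n * Real.log n)

/-- Condition (B4). -/
def CondB4 {n : ℕ} (ε η : ℝ) (u : Fin n → Fin 4) (Y : Fin n → ℝ) : Prop :=
  ∀ q : Fin 4,
    (n : ℝ) ^ ((1 : ℝ) / 2 - ε) ≤
      |(cntC u Y q : ℝ) + (cntN u Y q : ℝ) -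
        (cntC u Y (negIdx q) : ℝ) - (cntN u Y (negIdx q) : ℝ)| ∧
    η * (n : ℝ) ^ ((1 : ℝ) / 2 - ε) ≤ |(cntN u Y q : ℝ) - (cntN u Y (negIdx q) : ℝ)|

/-- Conditions (B1)–(B4) together. -/
def CondB {n p : ℕ} (ε : ℝ) (μ1 μ2 : Vec p) (η : ℝ) (u : Fin n → Fin 4)
    (X : Fin n → Vec p) (Y : Fin n → ℝ) : Prop :=
  CondB1 μ1 μ2 u X ∧ CondB2 μ1 μ2 u X ∧ CondB3 ε η u Y ∧ CondB4 ε η u Y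

/-- Condition (C1): `‖W^{(0)}‖_F² ≤ (3/2) ω_init² m p`. -/
def CondC1 {p m : ℕ} (winit : ℝ) (W0 : Fin m → Vec p) : Prop :=
  ∑ j, ∑ k, (W0 j k) ^ 2 ≤ 3 / 2 * winit ^ 2 * m * p

/-- The positive neurons `J_Pos`. -/
def posNeurons {m : ℕ} (a : Fin m → ℝ) : Finset (Fin m) :=
  Finset.univ.filter fun j => 0 < a j

/-- The negative neurons `J_Neg`. -/
def negNeurons {m : ℕ} (a : Fin m → ℝ) : Finset (Fin m) :=
  Finset.univ.filter fun j => a j < 0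

/-- Condition (C2): `|J_Pos| ≥ m/3` and `|J_Neg| ≥ m/3`. -/
def CondC2 {m : ℕ} (a : Fin m → ℝ) : Prop :=
  (m : ℝ) / 3 ≤ (posNeurons a).card ∧ (m : ℝ) / 3 ≤ (negNeurons a).card

/-- Condition (D1). -/
def CondD1 {n p m : ℕ} (u : Fin n → Fin 4) (X : Fin n → Vec p)
    (a : Fin m → ℝ) (W0 : Fin m → Vec p) : Prop :=
  ∀ i : Fin n,
    (m : ℝ) / 7 ≤ ((posNeurons a).filter fun j => 0 < dot (W0 j) (X i)).card ∧
    (m : ℝ) / 7 ≤ ((negNeurons a).filter fun j => 0 < dot (W0 j) (X i)).card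

/-- Condition (D2). -/
def CondD2 {n p m : ℕ} (ε : ℝ) (u : Fin n → Fin 4) (X : Fin n → Vec p) (Y : Fin n → ℝ)
    (a : Fin m → ℝ) (W0 : Fin m → Vec p) : Prop :=
  ∀ q : Fin 4, ∀ κ : ℝ, 0 ≤ κ → κ < 1 / 2 →
    (m : ℝ) * (n : ℝ) ^ (-(10 * ε)) ≤
      ((posNeurons a).filter fun j => Aligned u X Y W0 κ q j).card ∧
    (m : ℝ) * (n : ℝ) ^ (-(10 * ε)) ≤
      ((negNeurons a).filter fun j => Aligned u X Y W0 κ q j).card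

/-- Condition (D3). -/
def CondD3 {n p m : ℕ} (ε : ℝ) (u : Fin n → Fin 4) (X : Fin n → Vec p) (Y : Fin n → ℝ)
    (a : Fin m → ℝ) (W0 : Fin m → Vec p) : Prop :=
  ∀ q : Fin 4,
    (1 - 10 * (n : ℝ) ^ (-(20 * ε))) * (posNeurons a).card ≤
      ((posNeurons a).filter fun j =>
        Aligned u X Y W0 (20 * ε) q j ∨ Aligned u X Y W0 (20 * ε) (negIdx q) j).card ∧
    (1 - 10 * (n : ℝ) ^ (-(20 * ε))) * (negNeurons a).card ≤
      ((negNeurons a).filter fun j =>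
        Aligned u X Y W0 (20 * ε) q j ∨ Aligned u X Y W0 (20 * ε) (negIdx q) j).card

/-- Condition (D4). -/
def CondD4 {n p m : ℕ} (u : Fin n → Fin 4) (X : Fin n → Vec p) (Y : Fin n → ℝ)
    (a : Fin m → ℝ) (W0 : Fin m → Vec p) : Prop :=
  ∀ q : Fin 4, ∀ κ : ℝ, 0 ≤ κ → κ < 1 / 2 →
    ((n : ℝ) / 10) * ((posNeurons a).filter fun j => Aligned u X Y W0 κ q j).card ≤
      (∑ j ∈ (posNeurons a).filter (fun j => Aligned u X Y W0 κ q j),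
        ((cntC u Y q : ℝ) - (cntN u Y q : ℝ) - (dval u X Y W0 (negIdx q) j : ℝ))) ∧
    ((n : ℝ) / 10) * ((negNeurons a).filter fun j => Aligned u X Y W0 κ q j).card ≤
      (∑ j ∈ (negNeurons a).filter (fun j => Aligned u X Y W0 κ q j),
        ((cntC u Y q : ℝ) - (cntN u Y q : ℝ) - (dval u X Y W0 (negIdx q) j : ℝ)))

/-- Conditions (D1)–(D4) together. -/
def CondD {n p m : ℕ} (ε : ℝ) (u : Fin n → Fin 4) (X : Fin n → Vec p) (Y : Fin n → ℝ)
    (a : Fin m → ℝ) (W0 : Fin m → Vec p) : Prop :=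
  CondD1 u X a W0 ∧ CondD2 ε u X Y a W0 ∧ CondD3 ε u X Y a W0 ∧ CondD4 u X Y a W0

/-- A "good run": conditions (B1)–(B4), (C1)–(C2) and (D1)–(D4) all hold. -/
def GoodRun {n p m : ℕ} (ε : ℝ) (μ1 μ2 : Vec p) (η winit : ℝ) (u : Fin n → Fin 4)
    (X : Fin n → Vec p) (Y : Fin n → ℝ) (a : Fin m → ℝ) (W0 : Fin m → Vec p) : Prop :=
  CondB ε μ1 μ2 η u X Y ∧ CondC1 winit W0 ∧ CondC2 a ∧ CondD ε u X Y a W0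

/-- Labels take values in `{±1}`. -/
def ModelData {n : ℕ} (Y : Fin n → ℝ) : Prop := ∀ i, Y i = 1 ∨ Y i = -1

/-- Second-layer weights take values in `{±1/√m}`. -/
def ModelLayer {m : ℕ} (a : Fin m → ℝ) : Prop :=
  ∀ j, a j = 1 / Real.sqrt m ∨ a j = -(1 / Real.sqrt m)

end XOR

namespace XOR

attribute [local instance] Classical.propDecidable

/-!
Along the horizon `t ≤ 1 / (√n p α)` each inner product `⟨w_j, x_i⟩` moves by at most
`3αp / (n√m)` per step, so from the small initialization the network output stays below `1/4`
and the logistic weights `g_i` stay in `[1/4, 3/5]`. In one step `⟨w_j, x_k⟩` changes by the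
self term `(α a_j / n) g_k y_k ‖x_k‖²`, present only if neuron `j` is active on `x_k` and of size
at least `2α‖μ‖²/√m` because `‖x_k‖² ≥ p ≥ 8n‖μ‖²`, plus the cross terms of the other, nearly
orthogonal samples, of total size at most `(2/3)α‖μ‖²/√m`. An active neuron therefore moves by
at least `(4/3)α‖μ‖²/√m` in the direction of the sign of `a_j y_k`, and an inactive one by at most
`(2/3)α‖μ‖²/√m`: this gives (E1), (E2) by induction, and (E3) from (E2).
-/

section Vectors

variable {p : ℕ}

theorem dot_eq_dotProduct (x y : Vec p) : dot x y = x ⬝ᵥ y := rfl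

theorem dot_self_nonneg (x : Vec p) : 0 ≤ dot x x :=
  Finset.sum_nonneg fun _ _ => mul_self_nonneg _

theorem nrm_sq (x : Vec p) : nrm x ^ 2 = dot x x :=
  Real.sq_sqrt (dot_self_nonneg x)

theorem dot_sq_le (x y : Vec p) : dot x y ^ 2 ≤ dot x x * dot y y := by
  simpa only [dot, pow_two] using Finset.sum_mul_sq_le_sq_mul_sq Finset.univ x y

theorem MeanHyp.abs_dot_ctr_le {μ1 μ2 : Vec p} (h : MeanHyp μ1 μ2) (q r : Fin 4) :
    |dot (ctr μ1 μ2 q) (ctr μ1 μ2 r)| ≤ nrm μ1 ^ 2 := by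
  obtain ⟨h12, hnrm⟩ := h
  have h11 : μ1 ⬝ᵥ μ1 = nrm μ1 ^ 2 := (nrm_sq μ1).symm
  have h22 : μ2 ⬝ᵥ μ2 = nrm μ1 ^ 2 := by rw [hnrm, nrm_sq]; rfl
  have h21 : μ2 ⬝ᵥ μ1 = 0 := by rw [dotProduct_comm]; exact h12
  have h12' : μ1 ⬝ᵥ μ2 = 0 := h12
  fin_cases q <;> fin_cases r <;>
    simp [dot_eq_dotProduct, ctr, h11, h22, h12', h21] <;> positivity

end Vectors

section Losses

theorem lossG_pos (z : ℝ) : 0 < lossG z := by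
  unfold lossG; positivity

theorem lossG_le_one (z : ℝ) : lossG z ≤ 1 := by
  rw [lossG, div_le_one (by positivity)]
  linarith [Real.exp_pos z]

theorem lossG_le_of_abs_le {z : ℝ} (hz : |z| ≤ 1 / 4) : lossG z ≤ 3 / 5 := by
  rw [lossG, div_le_iff₀ (by positivity)]
  have := Real.add_one_le_exp z
  linarith [(abs_le.mp hz).1]

theorem le_lossG_of_abs_le {z : ℝ} (hz : |z| ≤ 1 / 4) : 1 / 4 ≤ lossG z := by
  rw [lossG, le_div_iff₀ (by positivity)]
  have : Real.exp z ≤ Real.exp 1 := Real.exp_le_exp.mpr (by linarith [(abs_le.mp hz).2])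
  linarith [Real.exp_one_lt_d9]

theorem reluD_nonneg (z : ℝ) : 0 ≤ reluD z := by
  unfold reluD; split_ifs <;> norm_num

theorem reluD_le_one (z : ℝ) : reluD z ≤ 1 := by
  unfold reluD; split_ifs <;> norm_num

theorem reluD_of_pos {z : ℝ} (h : 0 < z) : reluD z = 1 := if_pos h

theorem reluD_of_nonpos {z : ℝ} (h : z ≤ 0) : reluD z = 0 := if_neg h.not_gt

theorem abs_relu_le (z : ℝ) : |relu z| ≤ |z| := by
  rw [relu, abs_of_nonneg (le_max_right z 0)]
  exact max_le (le_abs_self z) (abs_nonneg z)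

end Losses

section Assumptions

variable {C : ℝ} {n p m : ℕ} {μn η α ω : ℝ}

theorem Assum.sq_pos (hA : Assum C n p m μn η α ω) (hC : 0 < C) (hn : 0 < n) (hp : 0 < p) :
    0 < μn ^ 2 := by
  have := Real.rpow_pos_of_pos (Nat.cast_pos.mpr hn : (0 : ℝ) < n) 0.51
  have := Real.sqrt_pos.mpr (Nat.cast_pos.mpr hp : (0 : ℝ) < p)
  exact lt_of_lt_of_le (by positivity) hA.1

theorem Assum.log_le (hA : Assum C n p m μn η α ω) (hC : 100 ≤ C) (hn : 0 < n) :
    100 * √(p * Real.log n) ≤ μn ^ 2 := by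
  have hn1 : (1 : ℝ) ≤ n := by exact_mod_cast hn
  have hlog : √(Real.log n) ≤ (n : ℝ) ^ (0.51 : ℝ) :=
    calc √(Real.log n) ≤ √n := Real.sqrt_le_sqrt (Real.log_le_self (by positivity))
      _ = (n : ℝ) ^ ((1 : ℝ) / 2) := Real.sqrt_eq_rpow _
      _ ≤ (n : ℝ) ^ (0.51 : ℝ) := Real.rpow_le_rpow_of_exponent_le hn1 (by norm_num)
  calc 100 * √(p * Real.log n) = 100 * (√p * √(Real.log n)) := by
        rw [Real.sqrt_mul (Nat.cast_nonneg p)]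
    _ ≤ C * (n : ℝ) ^ (0.51 : ℝ) * √p := by
        rw [mul_comm √p, ← mul_assoc]
        gcongr
    _ ≤ μn ^ 2 := hA.1

theorem Assum.eight_mul_le (hA : Assum C n p m μn η α ω) (hC : 8 ≤ C) (hn : 0 < n) :
    8 * n * μn ^ 2 ≤ p := by
  have hn1 : (1 : ℝ) ≤ n := by exact_mod_cast hn
  have : 8 * (n : ℝ) ≤ C * (n : ℝ) ^ 2 := by nlinarith
  nlinarith [hA.2.1, sq_nonneg μn]

theorem Assum.init_le (hA : Assum C n p m μn η α ω) (hn : 2 ≤ n) (hm : 0 < m)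
    (hω : 0 ≤ ω) : 2 * ω * √m * p ≤ α / √m * μn ^ 2 := by
  obtain ⟨-, -, -, -, hA5, -⟩ := hA
  have hm1 : (1 : ℝ) ≤ m := by exact_mod_cast hm
  have hm32 : (m : ℝ) ≤ (m : ℝ) ^ ((3 : ℝ) / 2) := by
    simpa using Real.rpow_le_rpow_of_exponent_le hm1 (by norm_num : (1 : ℝ) ≤ 3 / 2)
  have : 2 * (m : ℝ) ≤ n * (m : ℝ) ^ ((3 : ℝ) / 2) := by
    have : (2 : ℝ) ≤ n := by exact_mod_cast hn
    nlinarith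
  have hscale := mul_le_mul_of_nonneg_left this (mul_nonneg hω (Nat.cast_nonneg (α := ℝ) p))
  rw [div_mul_eq_mul_div, le_div_iff₀ (by positivity),
    show 2 * ω * √m * p * √m = 2 * ω * (√m * √m) * p by ring, Real.mul_self_sqrt (by positivity)]
  nlinarith

theorem Assum.mul_sq_le (hA : Assum C n p m μn η α ω) (hC : 10 ≤ C) (hn : 0 < n) (hp : 0 < p)
    (hα : 0 < α) : α * μn ^ 2 ≤ 1 / 100 := by
  obtain ⟨-, hA2, -, hA4, -, -⟩ := hA
  have hn1 : (1 : ℝ) ≤ n := by exact_mod_cast hn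
  have hp0 : (0 : ℝ) < p := by exact_mod_cast hp
  have hα1 : α * (C * n * p) ≤ 1 := by
    have := mul_le_mul_of_nonneg_right hA4 (by positivity : 0 ≤ C * n * p)
    rwa [one_div_mul_cancel (by positivity)] at this
  have hCn : 100 ≤ C * C * (n : ℝ) ^ 3 := by
    have : (1 : ℝ) ≤ (n : ℝ) ^ 3 := one_le_pow₀ hn1
    nlinarith
  have : α * μn ^ 2 * (C * C * n ^ 3) ≤ 1 := by
    refine le_of_mul_le_mul_right ?_ hp0
    have := mul_le_mul hα1 hA2 (by positivity) zero_le_one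
    nlinarith
  nlinarith [mul_le_mul_of_nonneg_left hCn (mul_nonneg hα.le (sq_nonneg μn))]

end Assumptions

section Data

variable {n p : ℕ}

structure GramBounds (X : Fin n → Vec p) (M : ℝ) : Prop where
  nonneg : 0 ≤ M
  eight_mul_le : 8 * n * M ≤ p
  le_dot_self : ∀ i, (p : ℝ) ≤ dot (X i) (X i)
  dot_self_le : ∀ i, dot (X i) (X i) ≤ 2 * p
  abs_dot_le : ∀ i k, i ≠ k → |dot (X i) (X k)| ≤ 11 / 10 * M

theorem gramBounds_of_condB {μ1 μ2 : Vec p} {u : Fin n → Fin 4} {X : Fin n → Vec p}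
    (hμ : MeanHyp μ1 μ2) (hB1 : CondB1 μ1 μ2 u X) (hB2 : CondB2 μ1 μ2 u X)
    (h8 : 8 * n * nrm μ1 ^ 2 ≤ p) (hlog : 100 * √(p * Real.log n) ≤ nrm μ1 ^ 2) :
    GramBounds X (nrm μ1 ^ 2) where
  nonneg := sq_nonneg _
  eight_mul_le := h8
  le_dot_self i := by
    have := (abs_le.mp (hB1 i).2).1
    rw [nrm_sq] at this
    linarith [Real.sqrt_nonneg (p * Real.log n)]
  dot_self_le i := by
    have hn : (1 : ℝ) ≤ n := by exact_mod_cast i.pos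
    have := (abs_le.mp (hB1 i).2).2
    rw [nrm_sq] at this
    nlinarith [sq_nonneg (nrm μ1)]
  abs_dot_le i k hik := by
    have := abs_sub_abs_le_abs_sub (dot (X i) (X k)) (dot (ctr μ1 μ2 (u i)) (ctr μ1 μ2 (u k)))
    linarith [hB2 i k hik, hμ.abs_dot_ctr_le (u i) (u k)]

theorem sum_erase_le_mul {f : Fin n → ℝ} {c : ℝ} (k : Fin n) (hc : 0 ≤ c)
    (hf : ∀ i, i ≠ k → f i ≤ c) : ∑ i ∈ Finset.univ.erase k, f i ≤ n * c :=
  calc _ ≤ (Finset.univ.erase k).card • c :=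
        Finset.sum_le_card_nsmul _ _ _ fun i hi => hf i (Finset.ne_of_mem_erase hi)
    _ ≤ n * c := by
        rw [nsmul_eq_mul]
        gcongr
        exact_mod_cast (Finset.card_erase_le).trans (Finset.card_fin n).le

theorem GramBounds.sum_abs_dot_le {X : Fin n → Vec p} {M : ℝ} (hG : GramBounds X M) (k : Fin n) :
    ∑ i, |dot (X i) (X k)| ≤ 3 * p := by
  rw [← Finset.add_sum_erase _ _ (Finset.mem_univ k), abs_of_nonneg (dot_self_nonneg _)]
  have := sum_erase_le_mul k (by linarith [hG.nonneg]) fun i hi => hG.abs_dot_le i k hi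
  nlinarith [hG.dot_self_le k, hG.eight_mul_le, hG.nonneg]

theorem CondC1.abs_dot_le {m : ℕ} {ω : ℝ} {W0 : Fin m → Vec p} (hC1 : CondC1 ω W0) (hω : 0 ≤ ω)
    {x : Vec p} (hx : dot x x ≤ 2 * p) (j : Fin m) : |dot (W0 j) x| ≤ 2 * ω * √m * p := by
  have hW : dot (W0 j) (W0 j) ≤ 3 / 2 * ω ^ 2 * m * p :=
    calc dot (W0 j) (W0 j) = ∑ k, W0 j k ^ 2 := by simp only [dot, pow_two]
      _ ≤ ∑ j, ∑ k, W0 j k ^ 2 :=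
          Finset.single_le_sum (f := fun j => ∑ k, W0 j k ^ 2)
            (fun _ _ => Finset.sum_nonneg fun _ _ => sq_nonneg _) (Finset.mem_univ j)
      _ ≤ _ := hC1
  refine abs_le_of_sq_le_sq ?_ (by positivity)
  calc dot (W0 j) x ^ 2 ≤ dot (W0 j) (W0 j) * dot x x := dot_sq_le _ _
    _ ≤ 3 / 2 * ω ^ 2 * m * p * (2 * p) := mul_le_mul hW hx (dot_self_nonneg x) (by positivity)
    _ ≤ (2 * ω * √m * p) ^ 2 := by
        rw [show (2 * ω * √m * p) ^ 2 = 4 * ω ^ 2 * √m ^ 2 * p ^ 2 by ring,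
          Real.sq_sqrt (Nat.cast_nonneg m)]
        have : 0 ≤ ω ^ 2 * m * p ^ 2 := by positivity
        linarith

end Data

section Model

variable {n p m : ℕ} {X : Fin n → Vec p} {Y : Fin n → ℝ} {a : Fin m → ℝ} {W : Fin m → Vec p}

theorem ModelData.abs_eq (hY : ModelData Y) (i : Fin n) : |Y i| = 1 := by
  rcases hY i with h | h <;> simp [h]

theorem ModelLayer.abs_eq (ha : ModelLayer a) (j : Fin m) : |a j| = 1 / √m := by
  rcases ha j with h | h <;> simp [h]

theorem ModelLayer.abs_mul_div (ha : ModelLayer a) {α : ℝ} (hα : 0 ≤ α) (j : Fin m) :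
    |α * a j / n| = α / (n * √m) := by
  rw [abs_div, abs_mul, ha.abs_eq, abs_of_nonneg hα, Nat.abs_cast]
  ring

theorem ModelLayer.abs_mul_eq (ha : ModelLayer a) (hY : ModelData Y) (j : Fin m) (k : Fin n) :
    |a j * Y k| = 1 / √m := by
  rw [abs_mul, ha.abs_eq, hY.abs_eq, mul_one]

theorem ModelData.abs_mul_nnet_le (hY : ModelData Y) (hW : ∀ i, |nnet a W (X i)| ≤ 1 / 4)
    (i : Fin n) : |Y i * nnet a W (X i)| ≤ 1 / 4 := by
  rw [abs_mul, hY.abs_eq, one_mul]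
  exact hW i

end Model

section GradientDescent

variable {n p m : ℕ} (α : ℝ) (X : Fin n → Vec p) (Y : Fin n → ℝ) (a : Fin m → ℝ)

def updCoef (W : Fin m → Vec p) (j : Fin m) (i : Fin n) : ℝ :=
  lossG (Y i * nnet a W (X i)) * reluD (dot (W j) (X i)) * Y i

theorem gdStep_eq (W : Fin m → Vec p) (j : Fin m) :
    gdStep α X Y a W j = W j + (α * a j / n) • ∑ i, updCoef X Y a W j i • X i := by
  funext k
  simp [gdStep, updCoef, Finset.sum_apply, mul_assoc]

theorem dot_gdStep (W : Fin m → Vec p) (j : Fin m) (x : Vec p) :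
    dot (gdStep α X Y a W j) x =
      dot (W j) x + α * a j / n * ∑ i, updCoef X Y a W j i * dot (X i) x := by
  simp only [dot_eq_dotProduct, gdStep_eq, add_dotProduct, smul_dotProduct, sum_dotProduct,
    smul_eq_mul]

theorem abs_nnet_le (W : Fin m → Vec p) (x : Vec p) :
    |nnet a W x| ≤ ∑ j, |a j| * |dot (W j) x| := by
  refine (Finset.abs_sum_le_sum_abs _ _).trans (Finset.sum_le_sum fun j _ => ?_)
  rw [abs_mul]
  exact mul_le_mul_of_nonneg_left (abs_relu_le _) (abs_nonneg _)

variable {X Y a}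

theorem abs_updCoef_le (hY : ModelData Y) (W : Fin m → Vec p) (j : Fin m) (i : Fin n) :
    |updCoef X Y a W j i| ≤ lossG (Y i * nnet a W (X i)) := by
  rw [updCoef, abs_mul, abs_mul, hY.abs_eq, mul_one, abs_of_pos (lossG_pos _),
    abs_of_nonneg (reluD_nonneg _)]
  exact mul_le_of_le_one_right (lossG_pos _).le (reluD_le_one _)

theorem abs_dot_gdStep_sub_le (hY : ModelData Y) (W : Fin m → Vec p) (j : Fin m) (x : Vec p) :
    |dot (gdStep α X Y a W j) x - dot (W j) x| ≤ |α * a j / n| * ∑ i, |dot (X i) x| := by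
  rw [dot_gdStep, add_sub_cancel_left, abs_mul]
  gcongr
  refine (Finset.abs_sum_le_sum_abs _ _).trans (Finset.sum_le_sum fun i _ => ?_)
  rw [abs_mul]
  exact mul_le_of_le_one_left (abs_nonneg _) ((abs_updCoef_le hY W j i).trans (lossG_le_one _))

theorem abs_dot_gdIter_sub_le (hY : ModelData Y) (W0 : Fin m → Vec p) (t : ℕ) (j : Fin m)
    (x : Vec p) :
    |dot (gdIter α X Y a W0 t j) x - dot (W0 j) x| ≤
      t * (|α * a j / n| * ∑ i, |dot (X i) x|) := by
  induction t with
  | zero => simp [gdIter]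
  | succ t ih =>
    have hstep := abs_dot_gdStep_sub_le α (X := X) (a := a) hY (gdIter α X Y a W0 t) j x
    have := abs_sub_le (dot (gdIter α X Y a W0 (t + 1) j) x) (dot (gdIter α X Y a W0 t j) x)
      (dot (W0 j) x)
    rw [gdIter] at this ⊢
    push_cast
    linarith

theorem abs_nnet_gdIter_le (hY : ModelData Y) (ha : ModelLayer a) (hα : 0 ≤ α) (hm : 0 < m)
    {W0 : Fin m → Vec p} {B0 S : ℝ} (hW0 : ∀ j i, |dot (W0 j) (X i)| ≤ B0)
    (hX : ∀ i, ∑ l, |dot (X l) (X i)| ≤ S) (t : ℕ) (i : Fin n) :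
    |nnet a (gdIter α X Y a W0 t) (X i)| ≤ √m * B0 + t * α * S / n := by
  have hsm : 0 < √(m : ℝ) := Real.sqrt_pos.mpr (by exact_mod_cast hm)
  have hdrift (j : Fin m) :
      |dot (gdIter α X Y a W0 t j) (X i)| ≤ B0 + t * (α / (n * √m) * S) := by
    have := abs_dot_gdIter_sub_le α (X := X) (a := a) hY W0 t j (X i)
    rw [ha.abs_mul_div hα] at this
    have := mul_le_mul_of_nonneg_left (hX i) (by positivity : 0 ≤ (t : ℝ) * (α / (n * √m)))
    have := abs_sub_abs_le_abs_sub (dot (gdIter α X Y a W0 t j) (X i)) (dot (W0 j) (X i))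
    nlinarith [hW0 j i]
  calc |nnet a (gdIter α X Y a W0 t) (X i)|
      ≤ ∑ j, |a j| * |dot (gdIter α X Y a W0 t j) (X i)| := abs_nnet_le a _ _
    _ ≤ ∑ _j : Fin m, 1 / √m * (B0 + t * (α / (n * √m) * S)) :=
        Finset.sum_le_sum fun j _ => by rw [ha.abs_eq]; gcongr; exact hdrift j
    _ = √m * B0 + t * α * S / n := by
        rw [Finset.sum_const, Finset.card_univ, Fintype.card_fin, nsmul_eq_mul]
        field_simp
        rw [Real.sq_sqrt (Nat.cast_nonneg m)]

end GradientDescent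

section Step

variable {n p m : ℕ} {α M : ℝ} {X : Fin n → Vec p} {Y : Fin n → ℝ} {a : Fin m → ℝ}
  {W : Fin m → Vec p}

theorem dot_gdStep_eq_self_add_cross (j : Fin m) (k : Fin n) :
    dot (gdStep α X Y a W j) (X k) = dot (W j) (X k) +
      α * a j / n * (updCoef X Y a W j k * dot (X k) (X k)) +
      α * a j / n * ∑ i ∈ Finset.univ.erase k, updCoef X Y a W j i * dot (X i) (X k) := by
  rw [dot_gdStep, ← Finset.add_sum_erase _ _ (Finset.mem_univ k)]
  ring

theorem abs_cross_le (hY : ModelData Y) (ha : ModelLayer a) (hG : GramBounds X M) (hα : 0 ≤ α)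
    (hW : ∀ i, |nnet a W (X i)| ≤ 1 / 4) (j : Fin m) (k : Fin n) :
    |α * a j / n * ∑ i ∈ Finset.univ.erase k, updCoef X Y a W j i * dot (X i) (X k)| ≤
      2 / 3 * (α / √m * M) := by
  have hn : (0 : ℝ) < n := by exact_mod_cast k.pos
  have hterm (i : Fin n) (hik : i ≠ k) :
      |updCoef X Y a W j i * dot (X i) (X k)| ≤ 3 / 5 * (11 / 10 * M) := by
    rw [abs_mul]
    have hg := lossG_le_of_abs_le (hY.abs_mul_nnet_le hW i)
    exact mul_le_mul ((abs_updCoef_le hY W j i).trans hg) (hG.abs_dot_le i k hik) (abs_nonneg _)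
      (by norm_num)
  have hsum := (Finset.abs_sum_le_sum_abs _ _).trans
    (sum_erase_le_mul k (by linarith [hG.nonneg]) hterm)
  have : 0 ≤ α / √m * M := by have := hG.nonneg; positivity
  calc |α * a j / n * ∑ i ∈ Finset.univ.erase k, updCoef X Y a W j i * dot (X i) (X k)|
      ≤ α / (n * √m) * (n * (3 / 5 * (11 / 10 * M))) := by
        rw [abs_mul, ha.abs_mul_div hα]
        gcongr
    _ = 33 / 50 * (α / √m * M) := by field_simp; ring
    _ ≤ 2 / 3 * (α / √m * M) := by linarith

theorem self_term_eq (j : Fin m) (k : Fin n) (hact : 0 < dot (W j) (X k)) :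
    α * a j / n * (updCoef X Y a W j k * dot (X k) (X k)) =
      a j * Y k * (α / n * lossG (Y k * nnet a W (X k)) * dot (X k) (X k)) := by
  rw [updCoef, reluD_of_pos hact]
  ring

theorem two_mul_le_self_scale (hY : ModelData Y) (hG : GramBounds X M) (hα : 0 ≤ α)
    (hW : ∀ i, |nnet a W (X i)| ≤ 1 / 4) (k : Fin n) :
    2 * (α * M) ≤ α / n * lossG (Y k * nnet a W (X k)) * dot (X k) (X k) := by
  have hn : (0 : ℝ) < n := by exact_mod_cast k.pos
  calc 2 * (α * M) ≤ α / n * (1 / 4) * p := by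
        rw [div_mul_eq_mul_div, div_mul_eq_mul_div, le_div_iff₀ hn]
        nlinarith [hG.eight_mul_le]
    _ ≤ α / n * lossG (Y k * nnet a W (X k)) * dot (X k) (X k) := by
        have := lossG_pos (Y k * nnet a W (X k))
        gcongr
        · exact le_lossG_of_abs_le (hY.abs_mul_nnet_le hW k)
        · exact hG.le_dot_self k

theorem dot_gdStep_ge_of_pos (hY : ModelData Y) (ha : ModelLayer a) (hG : GramBounds X M)
    (hα : 0 ≤ α) (hW : ∀ i, |nnet a W (X i)| ≤ 1 / 4) {j : Fin m} {k : Fin n}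
    (hjk : 0 < a j * Y k) (hact : 0 < dot (W j) (X k)) :
    dot (W j) (X k) + 4 / 3 * (α / √m * M) ≤ dot (gdStep α X Y a W j) (X k) := by
  have hσ : a j * Y k = 1 / √m := by rw [← ha.abs_mul_eq hY j k, abs_of_pos hjk]
  rw [dot_gdStep_eq_self_add_cross, self_term_eq j k hact, hσ]
  have := mul_le_mul_of_nonneg_left (two_mul_le_self_scale hY hG hα hW k)
    (by positivity : (0 : ℝ) ≤ 1 / √m)
  have := (abs_le.mp (abs_cross_le hY ha hG hα hW j k)).1
  have : 1 / √m * (2 * (α * M)) = 2 * (α / √m * M) := by ring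
  linarith

theorem dot_gdStep_le_of_neg (hY : ModelData Y) (ha : ModelLayer a) (hG : GramBounds X M)
    (hα : 0 ≤ α) (hW : ∀ i, |nnet a W (X i)| ≤ 1 / 4) {j : Fin m} {k : Fin n}
    (hjk : a j * Y k < 0) (hact : 0 < dot (W j) (X k)) :
    dot (gdStep α X Y a W j) (X k) ≤ dot (W j) (X k) - 4 / 3 * (α / √m * M) := by
  have hσ : a j * Y k = -(1 / √m) := by rw [← ha.abs_mul_eq hY j k, abs_of_neg hjk, neg_neg]
  rw [dot_gdStep_eq_self_add_cross, self_term_eq j k hact, hσ]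
  have := mul_le_mul_of_nonneg_left (two_mul_le_self_scale hY hG hα hW k)
    (by positivity : (0 : ℝ) ≤ 1 / √m)
  have := (abs_le.mp (abs_cross_le hY ha hG hα hW j k)).2
  have : 1 / √m * (2 * (α * M)) = 2 * (α / √m * M) := by ring
  linarith

theorem dot_gdStep_le_of_nonpos (hY : ModelData Y) (ha : ModelLayer a) (hG : GramBounds X M)
    (hα : 0 ≤ α) (hW : ∀ i, |nnet a W (X i)| ≤ 1 / 4) {j : Fin m} {k : Fin n}
    (hinact : dot (W j) (X k) ≤ 0) :
    dot (gdStep α X Y a W j) (X k) ≤ dot (W j) (X k) + 2 / 3 * (α / √m * M) := by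
  have hself : updCoef X Y a W j k = 0 := by
    simp only [updCoef, reluD_of_nonpos hinact, mul_zero, zero_mul]
  rw [dot_gdStep_eq_self_add_cross, hself, zero_mul, mul_zero, add_zero]
  linarith [(abs_le.mp (abs_cross_le hY ha hG hα hW j k)).2]

end Step

section Trajectory

theorem pos_of_pos_of_step {v : ℕ → ℝ} {s t : ℕ} (hst : s ≤ t) (hs : 0 < v s)
    (hstep : ∀ r < t, 0 < v r → 0 < v (r + 1)) : 0 < v t := by
  induction t, hst using Nat.le_induction with
  | base => exact hs
  | succ t _ ih => exact hstep t t.lt_succ_self (ih fun r hr => hstep r (hr.trans t.lt_succ_self))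

theorem le_of_step {v : ℕ → ℝ} {B : ℝ} (h0 : v 0 ≤ B) {t : ℕ}
    (hstep : ∀ r < t, v r ≤ B → v (r + 1) ≤ B) : v t ≤ B := by
  induction t with
  | zero => exact h0
  | succ t ih => exact hstep t t.lt_succ_self (ih fun r hr => hstep r (hr.trans t.lt_succ_self))

variable {n p m : ℕ} {α M L : ℝ} {X : Fin n → Vec p} {Y : Fin n → ℝ} {a : Fin m → ℝ}
  {W0 : Fin m → Vec p}

theorem cast_le_of_lt_of_le_add_one {r t : ℕ} (hr : r < t) (ht : (t : ℝ) ≤ L + 1) :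
    (r : ℝ) ≤ L := by
  have : (r : ℝ) + 1 ≤ t := by exact_mod_cast hr
  linarith

theorem dot_gdIter_pos_of_pos (hY : ModelData Y) (ha : ModelLayer a) (hG : GramBounds X M)
    (hα : 0 ≤ α)
    (hmargin : ∀ t : ℕ, (t : ℝ) ≤ L → ∀ i, |nnet a (gdIter α X Y a W0 t) (X i)| ≤ 1 / 4)
    {j : Fin m} {k : Fin n} (hjk : 0 < a j * Y k) {s t : ℕ} (hst : s ≤ t) (ht : (t : ℝ) ≤ L + 1)
    (hs : 0 < dot (gdIter α X Y a W0 s j) (X k)) : 0 < dot (gdIter α X Y a W0 t j) (X k) :=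
  pos_of_pos_of_step (v := fun t => dot (gdIter α X Y a W0 t j) (X k)) hst hs fun r hr hpos => by
    have hW := hmargin r (cast_le_of_lt_of_le_add_one hr ht)
    have := dot_gdStep_ge_of_pos hY ha hG hα hW hjk hpos
    have : 0 ≤ α / √m * M := by have := hG.nonneg; positivity
    show 0 < dot (gdStep α X Y a (gdIter α X Y a W0 r) j) (X k)
    linarith

theorem dot_gdIter_le (hY : ModelData Y) (ha : ModelLayer a) (hG : GramBounds X M) (hα : 0 ≤ α)
    (hmargin : ∀ t : ℕ, (t : ℝ) ≤ L → ∀ i, |nnet a (gdIter α X Y a W0 t) (X i)| ≤ 1 / 4)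
    {j : Fin m} {k : Fin n} (hjk : a j * Y k < 0) (h0 : dot (W0 j) (X k) ≤ α / √m * M) {t : ℕ}
    (ht : (t : ℝ) ≤ L + 1) : dot (gdIter α X Y a W0 t j) (X k) ≤ α / √m * M :=
  le_of_step (v := fun t => dot (gdIter α X Y a W0 t j) (X k)) h0 fun r hr hle => by
    have hW := hmargin r (cast_le_of_lt_of_le_add_one hr ht)
    have : 0 ≤ α / √m * M := by have := hG.nonneg; positivity
    show dot (gdStep α X Y a (gdIter α X Y a W0 r) j) (X k) ≤ _
    rcases le_or_gt (dot (gdIter α X Y a W0 r j) (X k)) 0 with hinact | hact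
    · linarith [dot_gdStep_le_of_nonpos hY ha hG hα hW hinact]
    · linarith [dot_gdStep_le_of_neg hY ha hG hα hW hjk hact]

theorem dot_gdIter_succ_neg (hY : ModelData Y) (ha : ModelLayer a) (hG : GramBounds X M)
    (hα : 0 < α) (hM : 0 < M)
    (hmargin : ∀ t : ℕ, (t : ℝ) ≤ L → ∀ i, |nnet a (gdIter α X Y a W0 t) (X i)| ≤ 1 / 4)
    {j : Fin m} {k : Fin n} (hjk : a j * Y k < 0) (h0 : dot (W0 j) (X k) ≤ α / √m * M) {t : ℕ}
    (ht : (t : ℝ) ≤ L) (hact : 0 < dot (gdIter α X Y a W0 t j) (X k)) :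
    dot (gdIter α X Y a W0 (t + 1) j) (X k) < 0 := by
  have := dot_gdIter_le hY ha hG hα.le hmargin hjk h0 (by linarith : (t : ℝ) ≤ L + 1)
  have := dot_gdStep_le_of_neg hY ha hG hα.le (hmargin t ht) hjk hact
  have : 0 < α / √m * M := by
    have : 0 < √(m : ℝ) := Real.sqrt_pos.mpr (by exact_mod_cast j.pos)
    positivity
  show dot (gdStep α X Y a (gdIter α X Y a W0 t) j) (X k) < 0
  linarith

theorem abs_nnet_gdIter_le_quarter {C μn η ω : ℝ} (hA : Assum C n p m μn η α ω) (hC : 10 ≤ C)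
    (hn : 400 ≤ n) (hp : 0 < p) (hm : 0 < m) (hα : 0 < α) (hω : 0 ≤ ω) (hY : ModelData Y)
    (ha : ModelLayer a) (hG : GramBounds X M) (hC1 : CondC1 ω W0) {t : ℕ}
    (ht : (t : ℝ) ≤ 1 / (√n * p * α)) (i : Fin n) :
    |nnet a (gdIter α X Y a W0 t) (X i)| ≤ 1 / 4 := by
  have hsm : 0 < √(m : ℝ) := Real.sqrt_pos.mpr (by exact_mod_cast hm)
  refine (abs_nnet_gdIter_le α hY ha hα.le hm
    (fun j i => hC1.abs_dot_le hω (hG.dot_self_le i) j) hG.sum_abs_dot_le t i).trans ?_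
  have hinit : √m * (2 * ω * √m * p) ≤ 1 / 100 :=
    calc √m * (2 * ω * √m * p) ≤ √m * (α / √m * μn ^ 2) :=
          mul_le_mul_of_nonneg_left (hA.init_le (by omega) hm hω) hsm.le
      _ = α * μn ^ 2 := by field_simp
      _ ≤ 1 / 100 := hA.mul_sq_le hC (by omega) hp hα
  have hdrift : t * α * (3 * p) / n ≤ 1 / 8 := by
    have hn' : (400 : ℝ) ≤ n := by exact_mod_cast hn
    have hsn : (20 : ℝ) ≤ √n := (Real.le_sqrt (by norm_num) (by positivity)).mpr (by linarith)
    have hp' : (0 : ℝ) < p := by exact_mod_cast hp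
    rw [le_div_iff₀ (by positivity)] at ht
    rw [div_le_iff₀ (by positivity)]
    nlinarith [mul_nonneg (mul_nonneg (Nat.cast_nonneg (α := ℝ) t) hp'.le) hα.le]
  linarith

end Trajectory

/-- Corollary on activation patterns, (E1)–(E3). -/
theorem activation_patterns :
    ∀ ε : ℝ, 0 < ε → ε < 1 / 4000 →
      ∃ (C₀ : ℝ) (N₀ : ℕ),
        ∀ C : ℝ, C₀ ≤ C →
        ∀ (n p m : ℕ) (μ1 μ2 : Vec p) (η α winit : ℝ)
          (u : Fin n → Fin 4) (X : Fin n → Vec p) (Y : Fin n → ℝ)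
          (a : Fin m → ℝ) (W0 : Fin m → Vec p),
          N₀ ≤ n →
          MeanHyp μ1 μ2 →
          ParamHyp η α winit →
          Assum C n p m (nrm μ1) η α winit →
          ModelData Y →
          ModelLayer a →
          GoodRun ε μ1 μ2 η winit u X Y a W0 →
          ∀ (j : Fin m) (k : Fin n),
            -- (E1)
            (0 < a j * Y k →
              ∀ s t : ℕ, (s : ℝ) < 1 / (Real.sqrt n * p * α) - 2 →
                (t : ℝ) ≤ 1 / (Real.sqrt n * p * α) - 2 → s ≤ t →
                0 < dot (gdIter α X Y a W0 s j) (X k) →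
                0 < dot (gdIter α X Y a W0 t j) (X k)) ∧
            -- (E2)
            (a j * Y k < 0 →
              ∀ t : ℕ, (t : ℝ) ≤ 1 / (Real.sqrt n * p * α) - 2 →
                dot (gdIter α X Y a W0 t j) (X k) ≤ α / Real.sqrt m * nrm μ1 ^ 2) ∧
            -- (E3)
            (a j * Y k < 0 →
              ∀ t : ℕ, (t : ℝ) ≤ 1 / (Real.sqrt n * p * α) - 3 →
                0 < dot (gdIter α X Y a W0 t j) (X k) →
                dot (gdIter α X Y a W0 (t + 1) j) (X k) < 0) := by
  intro ε _ _
  refine ⟨400, 400, fun C hC n p m μ1 μ2 η α winit u X Y a W0 hn hμ hpar hA hY ha hgood j k => ?_⟩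
  rcases Nat.eq_zero_or_pos p with rfl | hp
  · -- in dimension `0` every inner product and `‖μ‖` vanish
    simp [dot, nrm]
  obtain ⟨-, -, hα, hω⟩ := hpar
  obtain ⟨⟨hB1, hB2, -, -⟩, hC1, -, -⟩ := hgood
  have hn0 : 0 < n := by omega
  have hG : GramBounds X (nrm μ1 ^ 2) := gramBounds_of_condB hμ hB1 hB2
    (hA.eight_mul_le (by linarith) hn0) (hA.log_le (by linarith) hn0)
  have hmargin := fun (t : ℕ) (ht : (t : ℝ) ≤ 1 / (√n * p * α)) =>
    abs_nnet_gdIter_le_quarter hA (by linarith) hn hp j.pos hα hω hY ha hG hC1 ht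
  have hinit : dot (W0 j) (X k) ≤ α / √m * nrm μ1 ^ 2 :=
    (le_abs_self _).trans ((hC1.abs_dot_le hω (hG.dot_self_le k) j).trans
      (hA.init_le (by omega) j.pos hω))
  refine ⟨fun hjk s t _ ht hst hs => ?_, fun hjk t ht => ?_, fun hjk t ht hact => ?_⟩
  · exact dot_gdIter_pos_of_pos hY ha hG hα.le hmargin hjk hst (by linarith) hs
  · exact dot_gdIter_le hY ha hG hα.le hmargin hjk hinit (by linarith)
  · exact dot_gdIter_succ_neg hY ha hG hα (hA.sq_pos (by linarith) hn0 hp) hmargin hjk hinit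
      (by linarith) hact

end XOR
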